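/- Let n ≥ k > 2, let 𝔽 be a field, let S_k ⊆ C([n],k), and let H be a hyperplane of the simplicial matroid Sim_k^n(S_k). Then H is a modular flat of Sim_k^n(S_k) if and only if |S_k ∖ H| = 1. -/

import Mathlib

/-!
Common definitions for simplicial matroids, following Cordovil–Lemos–Linhares Sales,
"Dirac's theorem on simplicial matroids".

We model `[n] = {1,…,n}` by `Fin n`, and a subset of `[n]` by a `Finset (Fin n)`.
A family `S_k ⊆ C([n],k)` is a `Finset (Finset (Fin n))` (all of whose members
have cardinality `k`, which is imposed by hypotheses in the theorems).
-/

open Finset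

/-- The incidence number `[F' : F]`: if `F = i₁ < i₂ < ⋯ < iₘ` and `F' = F \ {iⱼ}`
then `[F' : F] = (-1)ʲ` (with `j` the 1-based position of the deleted element),
and `[F' : F] = 0` otherwise. -/
def inc {n : ℕ} (F' F : Finset (Fin n)) : ℤ :=
  ∑ i ∈ F, if F' = F.erase i then (-1 : ℤ) ^ (F.filter (fun j => j ≤ i)).card else 0

/-- The family `C([n], m)` of `m`-element subsets of `[n]`, as a type. -/
abbrev Csets (n m : ℕ) := {F : Finset (Fin n) // F.card = m}

/-- `∂_k F`, the boundary of a single `k`-subset `F` of `[n]`,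
as a vector of `𝔽^{C([n],k-1)}`. -/
def bvec (𝔽 : Type*) [Field 𝔽] (n k : ℕ) (F : Finset (Fin n)) : Csets n (k - 1) → 𝔽 :=
  fun F' => ((inc F'.1 F : ℤ) : 𝔽)

/-- Independence in the simplicial matroid `Sim_k^n(S_k)` over `𝔽`:
`X ⊆ S_k` is independent iff the vectors `∂_k F`, `F ∈ X`, are linearly independent. -/
def SimIndep (𝔽 : Type*) [Field 𝔽] (n k : ℕ) (Sk X : Finset (Finset (Fin n))) : Prop :=
  X ⊆ Sk ∧ LinearIndependent 𝔽 (fun F : X => bvec 𝔽 n k F.1)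

/-- A circuit of `Sim_k^n(S_k)`: a minimal dependent subset of the ground set. -/
def SimCircuit (𝔽 : Type*) [Field 𝔽] (n k : ℕ) (Sk C : Finset (Finset (Fin n))) : Prop :=
  C ⊆ Sk ∧ ¬ LinearIndependent 𝔽 (fun F : C => bvec 𝔽 n k F.1) ∧
    ∀ C' ⊂ C, LinearIndependent 𝔽 (fun F : C' => bvec 𝔽 n k F.1)

/-- The rank (in `Sim_k^n`) of a set `X` of `k`-subsets of `[n]`:
the dimension of the span of the boundaries of its members. -/
noncomputable def simRank (𝔽 : Type*) [Field 𝔽] (n k : ℕ) (X : Finset (Finset (Fin n))) : ℕ :=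
  Module.finrank 𝔽 (Submodule.span 𝔽 ((fun F => bvec 𝔽 n k F) '' (X : Set (Finset (Fin n)))))

/-- A cocircuit of `Sim_k^n(S_k)`, i.e. a circuit of the dual matroid:
a minimal set `C ⊆ S_k` whose complement does not span (`X` is independent in the dual
matroid iff `r(E ∖ X) = r(E)`). -/
def SimCocircuit (𝔽 : Type*) [Field 𝔽] (n k : ℕ) (Sk C : Finset (Finset (Fin n))) : Prop :=
  C ⊆ Sk ∧ simRank 𝔽 n k (Sk \ C) < simRank 𝔽 n k Sk ∧
    ∀ C' ⊂ C, simRank 𝔽 n k (Sk \ C') = simRank 𝔽 n k Sk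

/-- The boundary map `∂_k : 𝔽^{S_k} → 𝔽^{C([n],k-1)}`. -/
noncomputable def bdryMap (𝔽 : Type*) [Field 𝔽] (n k : ℕ) (Sk : Finset (Finset (Fin n))) :
    (↥Sk → 𝔽) →ₗ[𝔽] (Csets n (k - 1) → 𝔽) :=
  Matrix.mulVecLin (Matrix.of fun (F' : Csets n (k - 1)) (F : ↥Sk) => ((inc F'.1 F.1 : ℤ) : 𝔽))

/-- The coboundary `δ^{k-1} V` of a `(k-1)`-subset `V` of `[n]`,
as a vector of `𝔽^{S_k}`; its `F`-coordinate is `[V : F]`. -/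
def cobdry (𝔽 : Type*) [Field 𝔽] {n : ℕ} (Sk : Finset (Finset (Fin n)))
    (V : Finset (Fin n)) : ↥Sk → 𝔽 :=
  fun F => ((inc V F.1 : ℤ) : 𝔽)

/-- The boundary `∂_{k+1} X` of a `(k+1)`-subset `X` of `[n]`, regarded as a vector
of `𝔽^{S_k}`; its `F`-coordinate is `[F : X]`. -/
def pbdry (𝔽 : Type*) [Field 𝔽] {n : ℕ} (Sk : Finset (Finset (Fin n)))
    (X : Finset (Fin n)) : ↥Sk → 𝔽 :=
  fun F => ((inc F.1 X : ℤ) : 𝔽)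

open scoped Classical in
/-- The support of a vector of `𝔽^{S_k}`, as a set of `k`-subsets of `[n]`. -/
noncomputable def suppFin {𝔽 : Type*} [Field 𝔽] {n : ℕ} {Sk : Finset (Finset (Fin n))}
    (v : ↥Sk → 𝔽) : Finset (Finset (Fin n)) :=
  (Sk.attach.filter fun F => v F ≠ 0).image Subtype.val

/-- `supp(δ^{k-1} V) ⊆ S_k`. -/
noncomputable def suppδ (𝔽 : Type*) [Field 𝔽] {n : ℕ} (Sk : Finset (Finset (Fin n)))
    (V : Finset (Fin n)) : Finset (Finset (Fin n)) :=
  suppFin (cobdry 𝔽 Sk V)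

/-- The cocircuit space of `Sim_k^n(S_k)`: the orthogonal complement, with respect to the
standard bilinear form on `𝔽^{S_k}`, of the circuit space `ker ∂_k`. -/
noncomputable def cocircSpace (𝔽 : Type*) [Field 𝔽] (n k : ℕ) (Sk : Finset (Finset (Fin n))) :
    Submodule 𝔽 (↥Sk → 𝔽) where
  carrier := {w | ∀ v ∈ LinearMap.ker (bdryMap 𝔽 n k Sk), ∑ F, v F * w F = 0}
  zero_mem' := by intro v hv; simp
  add_mem' := by
    intro a b ha hb v hv
    have h1 := ha v hv
    have h2 := hb v hv
    simp only [Pi.add_apply, mul_add, Finset.sum_add_distrib]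
    rw [h1, h2, add_zero]
  smul_mem' := by
    intro c w hw v hv
    have h := hw v hv
    simp only [Pi.smul_apply, smul_eq_mul]
    calc ∑ F, v F * (c * w F) = ∑ F, c * (v F * w F) := by
          exact Finset.sum_congr rfl fun F _ => by ring
      _ = c * ∑ F, v F * w F := (Finset.mul_sum _ _ _).symm
      _ = 0 := by rw [h, mul_zero]

/-- The faces of the `k`-hyperclique complex `⟨S_k⟩`: all `F ⊆ [n]` with `|F| < k`,
together with all `F` every `k`-element subset of which lies in `S_k`. -/
def IsFace {n : ℕ} (k : ℕ) (Sk : Finset (Finset (Fin n))) (F : Finset (Fin n)) : Prop :=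
  F.card < k ∨ ∀ G ⊆ F, G.card = k → G ∈ Sk

/-- A facet of `⟨S_k⟩`: an inclusion-maximal face. -/
def IsFacet {n : ℕ} (k : ℕ) (Sk : Finset (Finset (Fin n))) (F : Finset (Fin n)) : Prop :=
  IsFace k Sk F ∧ ∀ G, IsFace k Sk G → F ⊆ G → F = G

/-- `V` is simplicial in `⟨S_k⟩` if there is exactly one facet `X` of `⟨S_k⟩`
with `V ⊊ X`. -/
def SimplicialFace {n : ℕ} (k : ℕ) (Sk : Finset (Finset (Fin n))) (V : Finset (Fin n)) : Prop :=
  ∃! X, IsFacet k Sk X ∧ V ⊂ X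

/-- The `k`-skeleta of the complexes `Δ_0 = ⟨S_k⟩`, `Δ_{j+1} = Δ_j ∖∖ V_j`, where
`Δ ∖∖ V = ⟨(skeleton of Δ) ∖ supp(δ^{k-1} V)⟩` (0-indexed). -/
noncomputable def delSeq (𝔽 : Type*) [Field 𝔽] {n : ℕ} (Sk : Finset (Finset (Fin n)))
    (V : ℕ → Finset (Fin n)) : ℕ → Finset (Finset (Fin n))
  | 0 => Sk
  | j + 1 => delSeq 𝔽 Sk V j \ suppδ 𝔽 (delSeq 𝔽 Sk V j) (V j)

/-- `C*_j := supp(δ^{k-1} V_j) ∖ ⋃_{i<j} supp(δ^{k-1} V_i)` (0-indexed). -/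
noncomputable def Cstar (𝔽 : Type*) [Field 𝔽] {n : ℕ} (Sk : Finset (Finset (Fin n)))
    (V : ℕ → Finset (Fin n)) (j : ℕ) : Finset (Finset (Fin n)) :=
  suppδ 𝔽 Sk (V j) \ (Finset.range j).biUnion (fun i => suppδ 𝔽 Sk (V i))

/-- `(V_1,…,V_r)` (0-indexed: `V 0, …, V (r-1)`) is a basic linear sequence for `⟨S_k⟩`,
where `r` is the rank of `Sim_k^n(S_k)`: each `V_j` is a `(k-1)`-subset of `[n]` and each
`C*_j` is a cocircuit of `Sim_k^n(S_k(Δ_{j-1}))`. -/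
def BasicLinearSeq (𝔽 : Type*) [Field 𝔽] (n k : ℕ) (Sk : Finset (Finset (Fin n))) (r : ℕ)
    (V : ℕ → Finset (Fin n)) : Prop :=
  simRank 𝔽 n k Sk = r ∧ (∀ j < r, (V j).card = k - 1) ∧
    ∀ j < r, SimCocircuit 𝔽 n k (delSeq 𝔽 Sk V j) (Cstar 𝔽 Sk V j)

/-- `⟨S_k⟩` is D-perfect: there is a basic linear sequence `V_1,…,V_r` such that each `V_j`
is simplicial in `Δ_{j-1}`. -/
def DPerfect (𝔽 : Type*) [Field 𝔽] (n k : ℕ) (Sk : Finset (Finset (Fin n))) : Prop :=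
  ∃ V : ℕ → Finset (Fin n),
    BasicLinearSeq 𝔽 n k Sk (simRank 𝔽 n k Sk) V ∧
      ∀ j < simRank 𝔽 n k Sk, SimplicialFace k (delSeq 𝔽 Sk V j) (V j)

/-- A flat of `Sim_k^n(S_k)`: a closed subset of the ground set. -/
def SimFlat (𝔽 : Type*) [Field 𝔽] (n k : ℕ) (Sk X : Finset (Finset (Fin n))) : Prop :=
  X ⊆ Sk ∧ ∀ F ∈ Sk,
    bvec 𝔽 n k F ∈ Submodule.span 𝔽 ((fun G => bvec 𝔽 n k G) '' (X : Set (Finset (Fin n)))) →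
      F ∈ X

/-- A hyperplane of `Sim_k^n(S_k)`: a flat of rank one less than the rank of the matroid. -/
def SimHyperplane (𝔽 : Type*) [Field 𝔽] (n k : ℕ) (Sk H : Finset (Finset (Fin n))) : Prop :=
  SimFlat 𝔽 n k Sk H ∧ simRank 𝔽 n k H + 1 = simRank 𝔽 n k Sk

/-- A modular flat of `Sim_k^n(S_k)`:
`r(X) + r(Y) = r(X ∪ Y) + r(X ∩ Y)` for every flat `Y`. -/
def ModularFlat (𝔽 : Type*) [Field 𝔽] (n k : ℕ) (Sk X : Finset (Finset (Fin n))) : Prop :=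
  SimFlat 𝔽 n k Sk X ∧ ∀ Y, SimFlat 𝔽 n k Sk Y →
    simRank 𝔽 n k X + simRank 𝔽 n k Y = simRank 𝔽 n k (X ∪ Y) + simRank 𝔽 n k (X ∩ Y)

open scoped Classical in
/-- The closure of `X` in `Sim_k^n(S_k)`. -/
noncomputable def simClosure (𝔽 : Type*) [Field 𝔽] (n k : ℕ)
    (Sk X : Finset (Finset (Fin n))) : Finset (Finset (Fin n)) :=
  Sk.filter fun F =>
    bvec 𝔽 n k F ∈ Submodule.span 𝔽 ((fun G => bvec 𝔽 n k G) '' (X : Set (Finset (Fin n))))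

/-- `Sim_k^n(S_k)` is supersolvable: it admits a maximal chain of modular flats
`cl(∅) = X_0 ⊊ X_1 ⊊ ⋯ ⊊ X_r = S_k`, `r` the rank. -/
def Supersolvable (𝔽 : Type*) [Field 𝔽] (n k : ℕ) (Sk : Finset (Finset (Fin n))) : Prop :=
  ∃ X : ℕ → Finset (Finset (Fin n)),
    X 0 = simClosure 𝔽 n k Sk ∅ ∧ X (simRank 𝔽 n k Sk) = Sk ∧
      (∀ i < simRank 𝔽 n k Sk, X i ⊂ X (i + 1)) ∧
      ∀ i ≤ simRank 𝔽 n k Sk, ModularFlat 𝔽 n k Sk (X i)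

/-- `H` is a dense hyperplane of `Sim_k^n(ground)`: a hyperplane of the form
`ground ∖ supp(δ^{k-1} V)` for some `(k-1)`-subset `V` simplicial in `⟨ground⟩`. -/
def DenseHyp (𝔽 : Type*) [Field 𝔽] (n k : ℕ) (ground H : Finset (Finset (Fin n))) : Prop :=
  SimHyperplane 𝔽 n k ground H ∧
    ∃ V : Finset (Fin n), V.card = k - 1 ∧ SimplicialFace k ground V ∧
      H = ground \ suppδ 𝔽 ground V

/-- `Sim_k^n(S_k)` is superdense: there is a chain `∅ = X_0 ⊊ X_1 ⊊ ⋯ ⊊ X_r = S_k` of flats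
(`r` the rank) with each `X_i` a dense hyperplane of `Sim_k^n(X_{i+1})`. -/
def Superdense (𝔽 : Type*) [Field 𝔽] (n k : ℕ) (Sk : Finset (Finset (Fin n))) : Prop :=
  ∃ X : ℕ → Finset (Finset (Fin n)),
    X 0 = ∅ ∧ X (simRank 𝔽 n k Sk) = Sk ∧
      (∀ i ≤ simRank 𝔽 n k Sk, SimFlat 𝔽 n k Sk (X i)) ∧
      (∀ i < simRank 𝔽 n k Sk, X i ⊂ X (i + 1)) ∧
      ∀ i < simRank 𝔽 n k Sk, DenseHyp 𝔽 n k (X (i + 1)) (X i)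

/-- `Sim_k^n(S_k)` is triangulable over `𝔽`: the boundaries of the `(k+1)`-faces of `⟨S_k⟩`
span the circuit space `ker ∂_k`. -/
def Triangulable (𝔽 : Type*) [Field 𝔽] (n k : ℕ) (Sk : Finset (Finset (Fin n))) : Prop :=
  Submodule.span 𝔽
      {v : ↥Sk → 𝔽 | ∃ X : Finset (Fin n), X.card = k + 1 ∧ IsFace k Sk X ∧ v = pbdry 𝔽 Sk X}
    = LinearMap.ker (bdryMap 𝔽 n k Sk)

/-- `Sim_k^n(S_k)` is strongly triangulable over `𝔽`: there are `(k+1)`-faces `X_1,…,X_{m'}`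
of `⟨S_k⟩` whose boundaries span `ker ∂_k` and such that every circuit `C` has a
representing vector `C⃗` with support `C` which is a combination, with nonzero coefficients,
of boundaries `∂_{k+1} X_{i_j}` with `⋃_{F ∈ C} F = ⋃_j X_{i_j}`. -/
def StronglyTriangulable (𝔽 : Type*) [Field 𝔽] (n k : ℕ)
    (Sk : Finset (Finset (Fin n))) : Prop :=
  ∃ (m' : ℕ) (Xs : Fin m' → Finset (Fin n)),
    (∀ i, (Xs i).card = k + 1 ∧ IsFace k Sk (Xs i)) ∧
    Submodule.span 𝔽 (Set.range fun i => pbdry 𝔽 Sk (Xs i)) = LinearMap.ker (bdryMap 𝔽 n k Sk) ∧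
    ∀ C, SimCircuit 𝔽 n k Sk C →
      ∃ (s : ℕ) (idx : Fin s → Fin m') (a : Fin s → 𝔽) (Cv : ↥Sk → 𝔽),
        (∀ j, a j ≠ 0) ∧ suppFin Cv = C ∧
        Cv = ∑ j, a j • pbdry 𝔽 Sk (Xs (idx j)) ∧
        C.biUnion id = Finset.univ.biUnion fun j : Fin s => Xs (idx j)

/-- The simple graph `([n], S_2)`. -/
def graphOf {n : ℕ} (S2 : Finset (Finset (Fin n))) : SimpleGraph (Fin n) where
  Adj u v := u ≠ v ∧ ({u, v} : Finset (Fin n)) ∈ S2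
  symm := by
    refine ⟨?_⟩
    intro u v h
    exact ⟨h.1.symm, by rw [Finset.pair_comm]; exact h.2⟩
  loopless := by refine ⟨?_⟩; intro u h; exact h.1 rfl

/-- A simple graph is chordal if every cycle of length at least four has a chord, i.e. an
edge of the graph joining two non-consecutive vertices of the cycle. -/
def Chordal {α : Type*} (G : SimpleGraph α) : Prop :=
  ∀ (v : α) (w : G.Walk v v), w.IsCycle → 4 ≤ w.length →
    ∃ u₁ u₂, u₁ ∈ w.support ∧ u₂ ∈ w.support ∧ G.Adj u₁ u₂ ∧ s(u₁, u₂) ∉ w.edges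

/-!
A `k`-set `G` has `k` facets `G ∖ {i}`, and a `k`-set `F ≠ G` contains at most one of them.
Hence if `T` has fewer than `k` members, some facet of `G ∉ T` is a coordinate on which `∂G`
is nonzero while every `∂F`, `F ∈ T`, vanishes, so `∂G` is not spanned by `∂T`. Consequently,
for `k > 2`, any two elements `F₁ ≠ F₂` of `S_k` form an independent flat. If two of them lie
outside a hyperplane `H`, this flat meets `H` trivially and spans the matroid together with
`H`, so `r(H) + 2 = r(H ∪ Y) + r(H ∩ Y)` fails. Conversely, if `S_k ∖ H = {F₀}` then every
flat `Y` either lies in `H` or has rank `r(Y ∖ {F₀}) + 1 = r(H ∩ Y) + 1`, which gives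
modularity.
-/

namespace Finset

variable {α : Type*} [DecidableEq α]

theorem subset_of_erase_subset_of_erase_subset {s t : Finset α} {a b : α} (hab : a ≠ b)
    (ha : s.erase a ⊆ t) (hb : s.erase b ⊆ t) : s ⊆ t := by
  intro x hx
  by_cases hxa : x = a
  · exact hb (mem_erase.2 ⟨hxa ▸ hab, hx⟩)
  · exact ha (mem_erase.2 ⟨hxa, hx⟩)

theorem exists_erase_not_subset {G : Finset α} {T : Finset (Finset α)} (hT : #T < #G)
    (hGT : ∀ F ∈ T, ¬ G ⊆ F) : ∃ i ∈ G, ∀ F ∈ T, ¬ G.erase i ⊆ F := by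
  by_contra! hcover
  refine hT.not_ge (card_le_card_of_forall_subsingleton (fun i F => G.erase i ⊆ F) hcover ?_)
  intro F hF a ⟨_, ha⟩ b ⟨_, hb⟩
  by_contra hab
  exact hGT F hF (subset_of_erase_subset_of_erase_subset hab ha hb)

end Finset

open Module

section SimplicialMatroid

variable {𝔽 : Type*} [Field 𝔽] {n k : ℕ}

lemma inc_eq_zero_of_not_subset {V F : Finset (Fin n)} (h : ¬ V ⊆ F) : inc V F = 0 :=
  Finset.sum_eq_zero fun i _ => if_neg fun hV : V = F.erase i => h (hV ▸ F.erase_subset i)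

lemma inc_erase {F : Finset (Fin n)} {i : Fin n} (hi : i ∈ F) :
    inc (F.erase i) F = (-1) ^ (F.filter (· ≤ i)).card := by
  refine (Finset.sum_eq_single i (fun j hj hji => if_neg fun h => ?_) (absurd hi)).trans
    (if_pos rfl)
  exact (Finset.mem_erase.1 (h ▸ Finset.mem_erase.2 ⟨hji, hj⟩)).1 rfl

variable (𝔽 n k) in
def simSpan (X : Finset (Finset (Fin n))) : Submodule 𝔽 (Csets n (k - 1) → 𝔽) :=
  Submodule.span 𝔽 (bvec 𝔽 n k '' X)

lemma simRank_eq_finrank_simSpan (X : Finset (Finset (Fin n))) :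
    simRank 𝔽 n k X = finrank 𝔽 (simSpan 𝔽 n k X) := rfl

lemma simSpan_mono {X Y : Finset (Finset (Fin n))} (h : X ⊆ Y) :
    simSpan 𝔽 n k X ≤ simSpan 𝔽 n k Y :=
  Submodule.span_mono (Set.image_mono (Finset.coe_subset.2 h))

lemma simRank_empty : simRank 𝔽 n k ∅ = 0 := by
  rw [simRank_eq_finrank_simSpan, simSpan, Finset.coe_empty, Set.image_empty,
    Submodule.span_empty, finrank_bot]

lemma simRank_mono {X Y : Finset (Finset (Fin n))} (h : X ⊆ Y) :
    simRank 𝔽 n k X ≤ simRank 𝔽 n k Y :=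
  Submodule.finrank_mono (simSpan_mono h)

lemma simSpan_insert [DecidableEq (Finset (Fin n))] (X : Finset (Finset (Fin n)))
    (F : Finset (Fin n)) :
    simSpan 𝔽 n k (insert F X) = simSpan 𝔽 n k X ⊔ 𝔽 ∙ bvec 𝔽 n k F := by
  rw [simSpan, Finset.coe_insert, Set.image_insert_eq, Submodule.span_insert, sup_comm, simSpan]

lemma simRank_insert [DecidableEq (Finset (Fin n))] {X : Finset (Finset (Fin n))}
    {F : Finset (Fin n)} (h : bvec 𝔽 n k F ∉ simSpan 𝔽 n k X) :
    simRank 𝔽 n k (insert F X) = simRank 𝔽 n k X + 1 := by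
  rw [simRank_eq_finrank_simSpan, simSpan_insert, Submodule.finrank_sup_span_singleton h,
    simRank_eq_finrank_simSpan]

lemma bvec_notMem_simSpan {T : Finset (Finset (Fin n))} {G : Finset (Fin n)} (hG : G.card = k)
    (hT : T.card < k) (hGT : ∀ F ∈ T, ¬ G ⊆ F) : bvec 𝔽 n k G ∉ simSpan 𝔽 n k T := by
  classical
  obtain ⟨i, hiG, hi⟩ := Finset.exists_erase_not_subset (hG ▸ hT) hGT
  let V : Csets n (k - 1) := ⟨G.erase i, by rw [Finset.card_erase_of_mem hiG, hG]⟩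
  have hvanish : simSpan 𝔽 n k T ≤ LinearMap.ker (LinearMap.proj (R := 𝔽) V) := by
    refine Submodule.span_le.2 ?_
    rintro _ ⟨F, hF, rfl⟩
    simp [bvec, V, inc_eq_zero_of_not_subset (hi F hF)]
  intro hmem
  have hzero : ((inc (G.erase i) G : ℤ) : 𝔽) = 0 := hvanish hmem
  rw [inc_erase hiG, Int.cast_pow, Int.cast_neg, Int.cast_one] at hzero
  exact pow_ne_zero _ (neg_ne_zero.2 one_ne_zero) hzero

lemma simRank_eq_card {T : Finset (Finset (Fin n))} (hTk : ∀ F ∈ T, F.card = k)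
    (hT : T.card ≤ k) : simRank 𝔽 n k T = T.card := by
  classical
  induction T using Finset.induction_on with
  | empty => exact simRank_empty
  | insert a T ha ih =>
    rw [Finset.forall_mem_insert] at hTk
    rw [Finset.card_insert_of_notMem ha] at hT ⊢
    refine (simRank_insert ?_).trans (congrArg (· + 1) (ih hTk.2 (by omega)))
    refine bvec_notMem_simSpan hTk.1 (by omega) fun F hF haF => ha ?_
    rwa [Finset.eq_of_subset_of_card_le haF (by rw [hTk.1, hTk.2 F hF])]

lemma simFlat_of_card_lt {Sk T : Finset (Finset (Fin n))} (hSk : ∀ F ∈ Sk, F.card = k)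
    (hTS : T ⊆ Sk) (hT : T.card < k) : SimFlat 𝔽 n k Sk T := by
  refine ⟨hTS, fun G hG hGT => ?_⟩
  by_contra hGT'
  refine bvec_notMem_simSpan (hSk G hG) hT (fun F hF hGF => hGT' ?_) hGT
  rwa [Finset.eq_of_subset_of_card_le hGF (by rw [hSk G hG, hSk F (hTS hF)])]

namespace SimHyperplane

variable {Sk H : Finset (Finset (Fin n))}

lemma sdiff_nonempty (hH : SimHyperplane 𝔽 n k Sk H) : (Sk \ H).Nonempty := by
  rw [Finset.sdiff_nonempty]
  intro hSH
  have := hH.2 ▸ simRank_mono (𝔽 := 𝔽) (k := k) hSH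
  omega

lemma bvec_notMem_simSpan (hH : SimHyperplane 𝔽 n k Sk H) {F : Finset (Fin n)}
    (hF : F ∈ Sk \ H) : bvec 𝔽 n k F ∉ simSpan 𝔽 n k H :=
  fun h => (Finset.mem_sdiff.1 hF).2 (hH.1.2 F (Finset.mem_sdiff.1 hF).1 h)

lemma simRank_union (hH : SimHyperplane 𝔽 n k Sk H) {Y : Finset (Finset (Fin n))}
    {F : Finset (Fin n)} (hY : Y ⊆ Sk) (hFY : F ∈ Y) (hF : F ∈ Sk \ H) :
    simRank 𝔽 n k (H ∪ Y) = simRank 𝔽 n k Sk := by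
  classical
  refine le_antisymm (simRank_mono (Finset.union_subset hH.1.1 hY)) ?_
  calc simRank 𝔽 n k Sk = simRank 𝔽 n k (insert F H) := by
        rw [simRank_insert (hH.bvec_notMem_simSpan hF), hH.2]
    _ ≤ simRank 𝔽 n k (H ∪ Y) :=
        simRank_mono (Finset.insert_subset (Finset.mem_union_right _ hFY)
          Finset.subset_union_left)

lemma modularFlat_of_card_sdiff_eq_one (hH : SimHyperplane 𝔽 n k Sk H)
    (h1 : (Sk \ H).card = 1) : ModularFlat 𝔽 n k Sk H := by
  classical
  obtain ⟨F₀, hF₀⟩ := Finset.card_eq_one.1 h1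
  have hF₀' : F₀ ∈ Sk \ H := hF₀ ▸ Finset.mem_singleton_self F₀
  have hSH : ∀ G ∈ Sk, G ≠ F₀ → G ∈ H := fun G hG hne => by
    by_contra hGH
    exact hne (Finset.mem_singleton.1 (hF₀ ▸ Finset.mem_sdiff.2 ⟨hG, hGH⟩))
  refine ⟨hH.1, fun Y hY => ?_⟩
  by_cases hFY : F₀ ∈ Y
  · have hinter : H ∩ Y = Y.erase F₀ := by
      ext G
      simp only [Finset.mem_inter, Finset.mem_erase]
      exact ⟨fun ⟨hGH, hGY⟩ => ⟨fun h => (Finset.mem_sdiff.1 hF₀').2 (h ▸ hGH), hGY⟩,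
        fun ⟨hne, hGY⟩ => ⟨hSH G (hY.1 hGY) hne, hGY⟩⟩
    have hYrank : simRank 𝔽 n k Y = simRank 𝔽 n k (Y.erase F₀) + 1 := by
      conv_lhs => rw [← Finset.insert_erase hFY]
      refine simRank_insert fun h => hH.bvec_notMem_simSpan hF₀' (simSpan_mono ?_ h)
      exact hinter ▸ Finset.inter_subset_left
    rw [hH.simRank_union hY.1 hFY hF₀', hinter, hYrank, ← hH.2]
    omega
  · have hYH : Y ⊆ H := fun G hG => hSH G (hY.1 hG) fun h => hFY (h ▸ hG)
    rw [Finset.union_eq_left.2 hYH, Finset.inter_eq_right.2 hYH]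

lemma card_sdiff_le_one_of_modularFlat (hk : 2 < k) (hSk : ∀ F ∈ Sk, F.card = k)
    (hH : SimHyperplane 𝔽 n k Sk H) (hmod : ModularFlat 𝔽 n k Sk H) :
    (Sk \ H).card ≤ 1 := by
  classical
  by_contra! h2
  obtain ⟨F₁, hF₁, F₂, hF₂, hF₁₂⟩ := Finset.one_lt_card.1 h2
  set Y : Finset (Finset (Fin n)) := {F₁, F₂}
  have hYSH : Y ⊆ Sk \ H := Finset.insert_subset hF₁ (Finset.singleton_subset_iff.2 hF₂)
  have hYS : Y ⊆ Sk := hYSH.trans Finset.sdiff_subset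
  have hYcard : Y.card = 2 := Finset.card_pair hF₁₂
  have hYrank : simRank 𝔽 n k Y = 2 :=
    hYcard ▸ simRank_eq_card (fun F hF => hSk F (hYS hF)) (by omega)
  have hHY : H ∩ Y = ∅ :=
    Finset.disjoint_iff_inter_eq_empty.1
      (Finset.disjoint_of_subset_right hYSH Finset.disjoint_sdiff)
  have hmodY := hmod.2 Y (simFlat_of_card_lt hSk hYS (by omega))
  rw [hH.simRank_union hYS (Finset.mem_insert_self _ _) hF₁, hHY, hYrank, ← hH.2,
    simRank_empty] at hmodY
  omega

end SimHyperplane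

end SimplicialMatroid

theorem stmt9_general (𝔽 : Type*) [Field 𝔽] (n k : ℕ) (hk : 2 < k)
    (Sk : Finset (Finset (Fin n))) (hSk : ∀ F ∈ Sk, F.card = k)
    (H : Finset (Finset (Fin n))) (hH : SimHyperplane 𝔽 n k Sk H) :
    ModularFlat 𝔽 n k Sk H ↔ (Sk \ H).card = 1 := by
  refine ⟨fun hmod => ?_, hH.modularFlat_of_card_sdiff_eq_one⟩
  have := hH.card_sdiff_le_one_of_modularFlat hk hSk hmod
  have := hH.sdiff_nonempty.card_pos
  omega

theorem stmt9 (𝔽 : Type*) [Field 𝔽] (n k : ℕ) (hk : 2 < k) (hkn : k ≤ n)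
    (Sk : Finset (Finset (Fin n))) (hSk : ∀ F ∈ Sk, F.card = k)
    (H : Finset (Finset (Fin n))) (hH : SimHyperplane 𝔽 n k Sk H) :
    ModularFlat 𝔽 n k Sk H ↔ (Sk \ H).card = 1 :=
  stmt9_general 𝔽 n k hk Sk hSk H hH
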